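/- Under the hypotheses of the previous statement (f μ-strongly convex, |f - g| ≤ α, ‖∇f - ∇g‖ ≤ ζ pointwise, g(w_T) ≤ g(w̃), ‖∇g(w̃)‖ ≤ ρ), the output satisfies ‖w_T - w*_f‖² ≤ 4α/μ + (ρ² + 2ζρ + ζ²)/μ². -/

import Mathlib

/-!
Strong monotonicity of `∇f` integrates along segments to the lower bound
`f v ≥ f u + ⟪∇f u, v - u⟫ + μ/2 ‖v - u‖²`. At the minimizer (where `∇f = 0`) this is quadratic
growth, `μ/2 ‖w - w*‖² ≤ f w - f w*`; minimizing its right-hand side over `v` gives the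
Polyak–Łojasiewicz inequality `f u - f w* ≤ ‖∇f u‖² / (2μ)`. Passing through `g` costs `α` twice:
`f w_T - f w* ≤ f w̃ - f w* + 2α ≤ ‖∇f w̃‖² / (2μ) + 2α`, and `‖∇f w̃‖ ≤ ρ + ζ`.
-/

open scoped RealInnerProductSpace Gradient

open Set

lemma add_add_half_le_of_mul_le_deriv_sub {g g' : ℝ → ℝ} {c : ℝ}
    (hg : ∀ t, HasDerivAt g (g' t) t) (hg' : ∀ t ∈ Ioo (0 : ℝ) 1, c * t ≤ g' t - g' 0) :
    g 0 + g' 0 + c / 2 ≤ g 1 := by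
  let φ : ℝ → ℝ := fun t => g t - t * g' 0 - c / 2 * t ^ 2
  have hφ : ∀ t, HasDerivAt φ (g' t - g' 0 - c * t) t := fun t => by
    have := ((hg t).sub ((hasDerivAt_id' t).mul_const (g' 0))).sub
      ((hasDerivAt_pow 2 t).const_mul (c / 2))
    exact this.congr_deriv (by simp; ring)
  have hmono : MonotoneOn φ (Icc 0 1) := by
    refine monotoneOn_of_hasDerivWithinAt_nonneg (convex_Icc 0 1)
      (fun t _ => (hφ t).continuousAt.continuousWithinAt)
      (fun t _ => (hφ t).hasDerivWithinAt) fun t ht => ?_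
    rw [interior_Icc] at ht
    linarith [hg' t ht]
  have := hmono (left_mem_Icc.2 zero_le_one) (right_mem_Icc.2 zero_le_one) zero_le_one
  simp only [φ] at this
  linarith

variable {E : Type*} [NormedAddCommGroup E] [InnerProductSpace ℝ E] [CompleteSpace E]

lemma hasDerivAt_comp_add_smul {f : E → ℝ} {u d : E} {t : ℝ}
    (hf : DifferentiableAt ℝ f (u + t • d)) :
    HasDerivAt (fun s : ℝ => f (u + s • d)) ⟪∇ f (u + t • d), d⟫ t := by
  rw [inner_gradient_left]
  have hline : HasDerivAt (fun s : ℝ => u + s • d) d t := by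
    simpa using ((hasDerivAt_id t).smul_const d).const_add u
  exact hf.hasFDerivAt.comp_hasDerivAt t hline

lemma IsLocalMin.gradient_eq_zero {f : E → ℝ} {a : E} (h : IsLocalMin f a) : ∇ f a = 0 := by
  rw [gradient, h.fderiv_eq_zero, map_zero]

def GradientStronglyMonotone (μ : ℝ) (f : E → ℝ) : Prop :=
  ∀ u v : E, μ * ‖u - v‖ ^ 2 ≤ ⟪∇ f u - ∇ f v, u - v⟫

namespace GradientStronglyMonotone

variable {μ : ℝ} {f : E → ℝ}

lemma add_inner_gradient_add_le (h : GradientStronglyMonotone μ f) (hf : Differentiable ℝ f)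
    (u v : E) : f u + ⟪∇ f u, v - u⟫ + μ / 2 * ‖v - u‖ ^ 2 ≤ f v := by
  set d := v - u
  have hline : ∀ t, HasDerivAt (fun s : ℝ => f (u + s • d)) ⟪∇ f (u + t • d), d⟫ t :=
    fun t => hasDerivAt_comp_add_smul (hf _)
  have hgrowth : ∀ t ∈ Ioo (0 : ℝ) 1,
      μ * ‖d‖ ^ 2 * t ≤ ⟪∇ f (u + t • d), d⟫ - ⟪∇ f (u + (0 : ℝ) • d), d⟫ := by
    rintro t ⟨ht, -⟩
    have key := h (u + t • d) u
    rw [add_sub_cancel_left, inner_smul_right, norm_smul, mul_pow, Real.norm_eq_abs, sq_abs,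
      inner_sub_left] at key
    rw [zero_smul, add_zero]
    nlinarith
  have := add_add_half_le_of_mul_le_deriv_sub hline hgrowth
  simp only [zero_smul, add_zero, one_smul, d, add_sub_cancel] at this
  linarith

lemma sq_norm_sub_le (h : GradientStronglyMonotone μ f) (hf : Differentiable ℝ f) {wstar : E}
    (hmin : ∀ v, f wstar ≤ f v) (w : E) : μ / 2 * ‖w - wstar‖ ^ 2 ≤ f w - f wstar := by
  have hgrad : ∇ f wstar = 0 := IsLocalMin.gradient_eq_zero (.of_forall hmin)
  have := h.add_inner_gradient_add_le hf wstar w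
  rw [hgrad, inner_zero_left] at this
  linarith

lemma sub_le_sq_norm_gradient (h : GradientStronglyMonotone μ f) (hf : Differentiable ℝ f)
    (hμ : 0 < μ) (u v : E) : f u - f v ≤ ‖∇ f u‖ ^ 2 / (2 * μ) := by
  have hlower := h.add_inner_gradient_add_le hf u v
  have hinner : -(‖∇ f u‖ * ‖v - u‖) ≤ ⟪∇ f u, v - u⟫ :=
    neg_le_of_abs_le (abs_real_inner_le_norm _ _)
  rw [le_div_iff₀ (by positivity)]
  nlinarith [sq_nonneg (μ * ‖v - u‖ - ‖∇ f u‖)]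

end GradientStronglyMonotone

theorem approx_gd_distance_bound_general {m : ℕ}
    (f g : EuclideanSpace ℝ (Fin m) → ℝ) (μ α ζ ρ : ℝ)
    (wstar wtilde wT : EuclideanSpace ℝ (Fin m))
    (hμ : 0 < μ)
    (hfdiff : Differentiable ℝ f)
    (hsc : ∀ u v : EuclideanSpace ℝ (Fin m),
      μ * ‖u - v‖ ^ 2 ≤ ⟪gradient f u - gradient f v, u - v⟫)
    (hmin : ∀ v : EuclideanSpace ℝ (Fin m), f wstar ≤ f v)
    (hobj : ∀ w : EuclideanSpace ℝ (Fin m), |f w - g w| ≤ α)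
    (hgrad : ∀ w : EuclideanSpace ℝ (Fin m), ‖gradient f w - gradient g w‖ ≤ ζ)
    (hgT : g wT ≤ g wtilde)
    (hρbound : ‖gradient g wtilde‖ ≤ ρ) :
    ‖wT - wstar‖ ^ 2 ≤ 4 * α / μ + (ρ ^ 2 + 2 * ζ * ρ + ζ ^ 2) / μ ^ 2 := by
  have hsc : GradientStronglyMonotone μ f := hsc
  have hgrowth := hsc.sq_norm_sub_le hfdiff hmin wT
  have hPL := hsc.sub_le_sq_norm_gradient hfdiff hμ wtilde wstar
  have hgrad_tilde : ‖∇ f wtilde‖ ^ 2 ≤ (ρ + ζ) ^ 2 := by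
    gcongr
    linarith [norm_le_norm_add_norm_sub' (∇ f wtilde) (∇ g wtilde), hgrad wtilde]
  have hfT : f wT ≤ g wT + α := by linarith [(abs_le.1 (hobj wT)).2]
  have hgtilde : g wtilde ≤ f wtilde + α := by linarith [(abs_le.1 (hobj wtilde)).1]
  have hgap : μ / 2 * ‖wT - wstar‖ ^ 2 ≤ 2 * α + (ρ + ζ) ^ 2 / (2 * μ) := by
    have : ‖∇ f wtilde‖ ^ 2 / (2 * μ) ≤ (ρ + ζ) ^ 2 / (2 * μ) := by gcongr
    linarith
  calc ‖wT - wstar‖ ^ 2 = 2 / μ * (μ / 2 * ‖wT - wstar‖ ^ 2) := by field_simp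
    _ ≤ 2 / μ * (2 * α + (ρ + ζ) ^ 2 / (2 * μ)) := by gcongr
    _ = 4 * α / μ + (ρ ^ 2 + 2 * ζ * ρ + ζ ^ 2) / μ ^ 2 := by field_simp; ring

/-- Convergence of approximate gradient descent (distance bound):
under the same hypotheses as the objective-value bound, the output satisfies
`‖w_T - wstar‖² ≤ 4α/μ + (ρ² + 2ζρ + ζ²)/μ²`. -/
theorem approx_gd_distance_bound {m : ℕ}
    (f g : EuclideanSpace ℝ (Fin m) → ℝ) (μ α ζ ρ : ℝ)
    (wstar wtilde wT : EuclideanSpace ℝ (Fin m))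
    (hμ : 0 < μ) (hα : 0 ≤ α) (hζ : 0 ≤ ζ) (hρ : 0 ≤ ρ)
    (hfdiff : Differentiable ℝ f) (hgdiff : Differentiable ℝ g)
    (hsc : ∀ u v : EuclideanSpace ℝ (Fin m),
      μ * ‖u - v‖ ^ 2 ≤ ⟪gradient f u - gradient f v, u - v⟫)
    (hmin : ∀ v : EuclideanSpace ℝ (Fin m), f wstar ≤ f v)
    (hobj : ∀ w : EuclideanSpace ℝ (Fin m), |f w - g w| ≤ α)
    (hgrad : ∀ w : EuclideanSpace ℝ (Fin m), ‖gradient f w - gradient g w‖ ≤ ζ)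
    (hgT : g wT ≤ g wtilde)
    (hρbound : ‖gradient g wtilde‖ ≤ ρ) :
    ‖wT - wstar‖ ^ 2 ≤ 4 * α / μ + (ρ ^ 2 + 2 * ζ * ρ + ζ ^ 2) / μ ^ 2 :=
  approx_gd_distance_bound_general f g μ α ζ ρ wstar wtilde wT hμ hfdiff hsc hmin hobj hgrad hgT
    hρbound
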